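/- Let (π : A → B, ⊞, 0) be as in the context. Then for all x, x' ∈ F(A) and b ∈ B (elements of B acting on A through 0): (x·x')·b = ⊞(Σ (x·b₍₁₎) ⊗ (x'·b₍₂₎)) and b·(x·x') = ⊞(Σ (b₍₁₎·x) ⊗ (b₍₂₎·x')), where in particular the displayed tensors lie in A⊗_B A. -/

import Mathlib

open TensorProduct

namespace FormalLoops

variable (k : Type*) [Field k]

/-- A unital, not necessarily associative, bialgebra with left and right divisions:
a cocommutative coassociative counital coalgebra together with a bilinear unital
multiplication and bilinear left/right divisions which are coalgebra morphisms and
satisfy the division cancellation laws (in Sweedler form). -/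
structure DivBialg (A : Type*) [AddCommGroup A] [Module k A] where
  Δ : A →ₗ[k] A ⊗[k] A
  ε : A →ₗ[k] k
  mul : A →ₗ[k] A →ₗ[k] A
  one : A
  ld : A →ₗ[k] A →ₗ[k] A
  rd : A →ₗ[k] A →ₗ[k] A
  coassoc : ∀ u : A, (TensorProduct.assoc k A A A) ((Δ.rTensor A) (Δ u)) = (Δ.lTensor A) (Δ u)
  counit_left : ∀ u : A, (TensorProduct.lid k A) ((ε.rTensor A) (Δ u)) = u
  counit_right : ∀ u : A, (TensorProduct.rid k A) ((ε.lTensor A) (Δ u)) = u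
  cocomm : ∀ u : A, (TensorProduct.comm k A A) (Δ u) = Δ u
  Δ_one : Δ one = one ⊗ₜ[k] one
  ε_one : ε one = 1
  one_mul : ∀ u, mul one u = u
  mul_one : ∀ u, mul u one = u
  Δ_mul : ∀ u v, Δ (mul u v) = TensorProduct.map₂ mul mul (Δ u) (Δ v)
  ε_mul : ∀ u v, ε (mul u v) = ε u * ε v
  Δ_ld : ∀ u v, Δ (ld u v) = TensorProduct.map₂ ld ld (Δ u) (Δ v)
  ε_ld : ∀ u v, ε (ld u v) = ε u * ε v
  Δ_rd : ∀ u v, Δ (rd u v) = TensorProduct.map₂ rd rd (Δ u) (Δ v)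
  ε_rd : ∀ u v, ε (rd u v) = ε u * ε v
  /-- Σ u₍₁₎\(u₍₂₎v) = ε(u)v -/
  ld_mul_cancel : ∀ u v, TensorProduct.lift ld ((LinearMap.lTensor A (mul.flip v)) (Δ u)) = ε u • v
  /-- Σ u₍₁₎(u₍₂₎\v) = ε(u)v -/
  mul_ld_cancel : ∀ u v, TensorProduct.lift mul ((LinearMap.lTensor A (ld.flip v)) (Δ u)) = ε u • v
  /-- Σ (vu₍₁₎)/u₍₂₎ = ε(u)v -/
  rd_mul_cancel : ∀ u v, TensorProduct.lift rd ((LinearMap.rTensor A (mul v)) (Δ u)) = ε u • v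
  /-- Σ (v/u₍₁₎)u₍₂₎ = ε(u)v -/
  mul_rd_cancel : ∀ u v, TensorProduct.lift mul ((LinearMap.rTensor A (rd v)) (Δ u)) = ε u • v

variable {A B : Type*} [AddCommGroup A] [Module k A] [AddCommGroup B] [Module k B]

/-- A morphism of unital bialgebras with divisions. -/
structure DivBialgHom (SA : DivBialg k A) (SB : DivBialg k B) (π : A →ₗ[k] B) : Prop where
  map_Δ : ∀ u, TensorProduct.map π π (SA.Δ u) = SB.Δ (π u)
  map_ε : ∀ u, SB.ε (π u) = SA.ε u
  map_mul : ∀ u v, π (SA.mul u v) = SB.mul (π u) (π v)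
  map_one : π SA.one = SB.one
  map_ld : ∀ u v, π (SA.ld u v) = SB.ld (π u) (π v)
  map_rd : ∀ u v, π (SA.rd u v) = SB.rd (π u) (π v)

/-- `D` is a subcoalgebra w.r.t. the comultiplication `Δ`: `Δ(D) ⊆ D ⊗ D`. -/
def IsSubcoalg {M : Type*} [AddCommGroup M] [Module k M] (Δ : M →ₗ[k] M ⊗[k] M)
    (D : Submodule k M) : Prop :=
  ∀ x ∈ D, Δ x ∈ LinearMap.range (TensorProduct.map D.subtype D.subtype)

/-- `F(A)`: the sum of all subcoalgebras `D ⊆ A` on which `π = ε(·) • 1`. -/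
def Fsub (SA : DivBialg k A) (oneB : B) (π : A →ₗ[k] B) : Submodule k A :=
  sSup {D : Submodule k A | IsSubcoalg k SA.Δ D ∧ ∀ x ∈ D, π x = SA.ε x • oneB}

end FormalLoops

namespace FormalLoops

variable (k : Type*) [Field k]
variable {A B : Type*} [AddCommGroup A] [Module k A] [AddCommGroup B] [Module k B]

/-- The comultiplication of the tensor-product coalgebra `A ⊗ A`. -/
noncomputable def tcomul (SA : DivBialg k A) :
    A ⊗[k] A →ₗ[k] (A ⊗[k] A) ⊗[k] (A ⊗[k] A) :=
  (TensorProduct.tensorTensorTensorComm k A A A A).toLinearMap ∘ₗ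
    TensorProduct.map SA.Δ SA.Δ

/-- The counit of the tensor-product coalgebra `A ⊗ A`. -/
noncomputable def tcounit (SA : DivBialg k A) : A ⊗[k] A →ₗ[k] k :=
  (TensorProduct.lid k k).toLinearMap ∘ₗ TensorProduct.map SA.ε SA.ε

/-- The linear map `A ⊗ A → B`, `u ⊗ v ↦ ε(v) π(u)`. -/
noncomputable def pbFst (SA : DivBialg k A) (π : A →ₗ[k] B) : A ⊗[k] A →ₗ[k] B :=
  (TensorProduct.rid k B).toLinearMap ∘ₗ TensorProduct.map π SA.ε

/-- The linear map `A ⊗ A → B`, `u ⊗ v ↦ ε(u) π(v)`. -/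
noncomputable def pbSnd (SA : DivBialg k A) (π : A →ₗ[k] B) : A ⊗[k] A →ₗ[k] B :=
  (TensorProduct.lid k B).toLinearMap ∘ₗ TensorProduct.map SA.ε π

/-- The pullback `A ⊗_B A`: the sum of all subcoalgebras of the tensor-product
coalgebra `A ⊗ A` on which `u ⊗ v ↦ ε(v)π(u)` and `u ⊗ v ↦ ε(u)π(v)` agree. -/
noncomputable def pbSub (SA : DivBialg k A) (π : A →ₗ[k] B) : Submodule k (A ⊗[k] A) :=
  sSup {C : Submodule k (A ⊗[k] A) | IsSubcoalg k (tcomul k SA) C ∧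
    ∀ t ∈ C, pbFst k SA π t = pbSnd k SA π t}

/-- The data of an abelian group `(π : A → B, ⊞, 0)` in the comma category over `B`:
a linear map `⊞ = bp : A ⊗_B A → A` which lies over `B`, is a coalgebra morphism
(witnessed by a corestriction `Δpb` of the comultiplication of `A ⊗ A` to `A ⊗_B A`),
is multiplicative, commutative, associative on `F(A)` and has `0 = z ∘ π` as unit. -/
structure BoxPlusData (SA : DivBialg k A) (SB : DivBialg k B)
    (π : A →ₗ[k] B) (z : B →ₗ[k] A) where
  bp : ↥(pbSub k SA π) →ₗ[k] A
  Δpb : ↥(pbSub k SA π) →ₗ[k] (↥(pbSub k SA π) ⊗[k] ↥(pbSub k SA π))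
  Δpb_compat : ∀ t : pbSub k SA π,
    TensorProduct.map (pbSub k SA π).subtype (pbSub k SA π).subtype (Δpb t)
      = tcomul k SA (t : A ⊗[k] A)
  π_bp : ∀ t : pbSub k SA π, π (bp t) = pbFst k SA π (t : A ⊗[k] A)
  Δ_bp : ∀ t : pbSub k SA π, SA.Δ (bp t) = TensorProduct.map bp bp (Δpb t)
  ε_bp : ∀ t : pbSub k SA π, SA.ε (bp t) = tcounit k SA (t : A ⊗[k] A)
  bp_mul : ∀ (t t' : pbSub k SA π)
      (h : TensorProduct.map₂ SA.mul SA.mul (t : A ⊗[k] A) (t' : A ⊗[k] A) ∈ pbSub k SA π),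
      bp ⟨TensorProduct.map₂ SA.mul SA.mul (t : A ⊗[k] A) (t' : A ⊗[k] A), h⟩
        = SA.mul (bp t) (bp t')
  bp_flip : ∀ (t : pbSub k SA π)
      (h : (TensorProduct.comm k A A) (t : A ⊗[k] A) ∈ pbSub k SA π),
      bp ⟨(TensorProduct.comm k A A) (t : A ⊗[k] A), h⟩ = bp t
  bp_assoc : ∀ x ∈ Fsub k SA SB.one π, ∀ y ∈ Fsub k SA SB.one π, ∀ w ∈ Fsub k SA SB.one π,
      ∀ (h1 : x ⊗ₜ[k] y ∈ pbSub k SA π) (h2 : y ⊗ₜ[k] w ∈ pbSub k SA π)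
        (h3 : (bp ⟨x ⊗ₜ[k] y, h1⟩) ⊗ₜ[k] w ∈ pbSub k SA π)
        (h4 : x ⊗ₜ[k] (bp ⟨y ⊗ₜ[k] w, h2⟩) ∈ pbSub k SA π),
      bp ⟨(bp ⟨x ⊗ₜ[k] y, h1⟩) ⊗ₜ[k] w, h3⟩ = bp ⟨x ⊗ₜ[k] (bp ⟨y ⊗ₜ[k] w, h2⟩), h4⟩
  bp_unit_right : ∀ (u : A)
      (h : (LinearMap.lTensor A (z ∘ₗ π)) (SA.Δ u) ∈ pbSub k SA π),
      bp ⟨(LinearMap.lTensor A (z ∘ₗ π)) (SA.Δ u), h⟩ = u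
  bp_unit_left : ∀ (u : A)
      (h : (LinearMap.rTensor A (z ∘ₗ π)) (SA.Δ u) ∈ pbSub k SA π),
      bp ⟨(LinearMap.rTensor A (z ∘ₗ π)) (SA.Δ u), h⟩ = u

end FormalLoops

/-!
Both `x ⊗ x'` and `(0 ⊗ 0)(Δb)` lie in subcoalgebras of `A ⊗ A` over which the two maps to `B`
agree: the first because `F(A)` is a subcoalgebra on which `π = ε(·)1`, the second because
`Δ : B → B ⊗ B` is a coalgebra morphism for cocommutative `B`. Hence both lie in `A ⊗_B A`, which
is closed under componentwise multiplication, and so do the displayed tensors, which are the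
products `(x ⊗ x')·(0 ⊗ 0)(Δb)` and `(0 ⊗ 0)(Δb)·(x ⊗ x')`. Multiplicativity of `⊞` reduces the
claim to `⊞(x ⊗ x') = xx'` and `⊞((0 ⊗ 0)(Δb)) = 0(b)`. Both follow from the unit law: for
`x ∈ F(A)` one has `(id ⊗ 0π)(Δx) = x ⊗ 1`, and `x ⊗ x' = (x ⊗ 1)(1 ⊗ x')`.
-/

namespace FormalLoops

variable {k : Type*} [Field k]

section Tensor

variable {M N P : Type*} [AddCommGroup M] [Module k M] [AddCommGroup N] [Module k N]
  [AddCommGroup P] [Module k P]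

lemma isSubcoalg_iff (Δ : M →ₗ[k] M ⊗[k] M) (D : Submodule k M) :
    IsSubcoalg k Δ D ↔ D ≤ (Submodule.map₂ (mk k M M) D D).comap Δ := by
  simp only [IsSubcoalg, ← range_mapIncl, mapIncl, SetLike.le_def, Submodule.mem_comap]

lemma isSubcoalg_sSup {Δ : M →ₗ[k] M ⊗[k] M} {S : Set (Submodule k M)}
    (hS : ∀ D ∈ S, IsSubcoalg k Δ D) : IsSubcoalg k Δ (sSup S) := by
  rw [isSubcoalg_iff]
  refine sSup_le fun D hD => ((isSubcoalg_iff Δ D).1 (hS D hD)).trans ?_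
  exact Submodule.comap_mono (Submodule.map₂_le_map₂ (le_sSup hD) (le_sSup hD))

lemma map₂_map₂_mk_le {β : M ⊗[k] M →ₗ[k] N ⊗[k] N →ₗ[k] P} {D₁ D₂ : Submodule k M}
    {E₁ E₂ : Submodule k N} {S : Submodule k P}
    (h : ∀ a ∈ D₁, ∀ b ∈ D₂, ∀ c ∈ E₁, ∀ d ∈ E₂, β (a ⊗ₜ b) (c ⊗ₜ d) ∈ S) :
    Submodule.map₂ β (Submodule.map₂ (mk k M M) D₁ D₂) (Submodule.map₂ (mk k N N) E₁ E₂) ≤ S := by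
  have hgen : ∀ a ∈ D₁, ∀ b ∈ D₂, Submodule.map₂ (mk k N N) E₁ E₂ ≤ S.comap (β (a ⊗ₜ b)) :=
    fun a ha b hb => Submodule.map₂_le.2 fun c hc d hd => h a ha b hb c hc d hd
  refine Submodule.map₂_le.2 fun p hp q hq => ?_
  have : Submodule.map₂ (mk k M M) D₁ D₂ ≤ S.comap (β.flip q) :=
    Submodule.map₂_le.2 fun a ha b hb => hgen a ha b hb hq
  exact this hp

lemma tensorTensorTensorComm_map₂_map₂ (f : M →ₗ[k] N →ₗ[k] P)
    (X : (M ⊗[k] M) ⊗[k] (M ⊗[k] M)) (Y : (N ⊗[k] N) ⊗[k] (N ⊗[k] N)) :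
    tensorTensorTensorComm k P P P P (map₂ (map₂ f f) (map₂ f f) X Y) =
      map₂ (map₂ f f) (map₂ f f) (tensorTensorTensorComm k M M M M X)
        (tensorTensorTensorComm k N N N N Y) := by
  have : (map₂ (map₂ f f) (map₂ f f)).compr₂ (tensorTensorTensorComm k P P P P).toLinearMap =
      (map₂ (map₂ f f) (map₂ f f)).compl₁₂ (tensorTensorTensorComm k M M M M).toLinearMap
        (tensorTensorTensorComm k N N N N).toLinearMap := by
    ext
    simp [map₂_apply_tmul]
  exact LinearMap.congr_fun₂ this X Y

end Tensor

section Cocommutative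

variable {B : Type*} [AddCommGroup B] [Module k B]

noncomputable abbrev DivBialg.toCoalgebra (S : DivBialg k B) : Coalgebra k B where
  comul := S.Δ
  counit := S.ε
  coassoc := LinearMap.ext S.coassoc
  rTensor_counit_comp_comul := LinearMap.ext fun u => by
    simpa using congrArg (TensorProduct.lid k B).symm (S.counit_left u)
  lTensor_counit_comp_comul := LinearMap.ext fun u => by
    simpa using congrArg (TensorProduct.rid k B).symm (S.counit_right u)

-- The comultiplication of a cocommutative coalgebra is a coalgebra morphism.
lemma DivBialg.tensorTensorTensorComm_map_comul (S : DivBialg k B) (b : B) :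
    tensorTensorTensorComm k B B B B (map S.Δ S.Δ (S.Δ b)) = map S.Δ S.Δ (S.Δ b) := by
  let := S.toCoalgebra
  have : Coalgebra.IsCocomm k B := ⟨LinearMap.ext S.cocomm⟩
  have := LinearMap.congr_fun (Coalgebra.comulCoalgHom k B).map_comp_comul b
  rw [TensorProduct.comul_def, AlgebraTensorModule.map_eq,
    AlgebraTensorModule.tensorTensorTensorComm_eq] at this
  exact this.symm

end Cocommutative

variable {A B : Type*} [AddCommGroup A] [Module k A] [AddCommGroup B] [Module k B]
  {SA : DivBialg k A} {SB : DivBialg k B} {π : A →ₗ[k] B} {z : B →ₗ[k] A}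

lemma tcomul_map₂_mul (t t' : A ⊗[k] A) :
    tcomul k SA (map₂ SA.mul SA.mul t t') =
      map₂ (map₂ SA.mul SA.mul) (map₂ SA.mul SA.mul) (tcomul k SA t) (tcomul k SA t') := by
  have : (map₂ SA.mul SA.mul).compr₂ (map SA.Δ SA.Δ) =
      (map₂ (map₂ SA.mul SA.mul) (map₂ SA.mul SA.mul)).compl₁₂
        (map SA.Δ SA.Δ) (map SA.Δ SA.Δ) := by
    ext
    simp [map₂_apply_tmul, SA.Δ_mul]
  have h := LinearMap.congr_fun₂ this t t'
  simp only [LinearMap.compr₂_apply, LinearMap.compl₁₂_apply] at h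
  simp only [tcomul, LinearMap.comp_apply, LinearEquiv.coe_coe, h, tensorTensorTensorComm_map₂_map₂]

lemma pbFst_map₂_mul (hπ : DivBialgHom k SA SB π) (t t' : A ⊗[k] A) :
    pbFst k SA π (map₂ SA.mul SA.mul t t') = SB.mul (pbFst k SA π t) (pbFst k SA π t') := by
  have : (map₂ SA.mul SA.mul).compr₂ (pbFst k SA π) =
      SB.mul.compl₁₂ (pbFst k SA π) (pbFst k SA π) := by
    ext
    simp [pbFst, map₂_apply_tmul, SA.ε_mul, hπ.map_mul, smul_smul, mul_comm]
  exact LinearMap.congr_fun₂ this t t'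

lemma pbSnd_map₂_mul (hπ : DivBialgHom k SA SB π) (t t' : A ⊗[k] A) :
    pbSnd k SA π (map₂ SA.mul SA.mul t t') = SB.mul (pbSnd k SA π t) (pbSnd k SA π t') := by
  have : (map₂ SA.mul SA.mul).compr₂ (pbSnd k SA π) =
      SB.mul.compl₁₂ (pbSnd k SA π) (pbSnd k SA π) := by
    ext
    simp [pbSnd, map₂_apply_tmul, SA.ε_mul, hπ.map_mul, smul_smul, mul_comm]
  exact LinearMap.congr_fun₂ this t t'

lemma Fsub_isSubcoalg (oneB : B) :
    IsSubcoalg k SA.Δ (Fsub k SA oneB π) :=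
  isSubcoalg_sSup fun _ hD => hD.1

lemma map_eq_smul_of_mem_Fsub {oneB : B} {x : A} (hx : x ∈ Fsub k SA oneB π) :
    π x = SA.ε x • oneB :=
  (sSup_le fun _ hD y hy => hD.2 y hy :
    Fsub k SA oneB π ≤ LinearMap.eqLocus π (SA.ε.smulRight oneB)) hx

lemma one_mem_Fsub (hπ : DivBialgHom k SA SB π) : SA.one ∈ Fsub k SA SB.one π := by
  suffices h : (k ∙ SA.one) ≤ Fsub k SA SB.one π from h (Submodule.mem_span_singleton_self _)
  refine le_sSup ⟨?_, fun x hx => ?_⟩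
  · rw [isSubcoalg_iff, Submodule.span_singleton_le_iff_mem, Submodule.mem_comap, SA.Δ_one]
    exact Submodule.apply_mem_map₂ _ (Submodule.mem_span_singleton_self _)
      (Submodule.mem_span_singleton_self _)
  · obtain ⟨c, rfl⟩ := Submodule.mem_span_singleton.1 hx
    simp [hπ.map_one, SA.ε_one]

lemma le_pbSub {C : Submodule k (A ⊗[k] A)} (hC : IsSubcoalg k (tcomul k SA) C)
    (hCπ : ∀ t ∈ C, pbFst k SA π t = pbSnd k SA π t) : C ≤ pbSub k SA π :=
  le_sSup ⟨hC, hCπ⟩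

lemma pbSub_isSubcoalg : IsSubcoalg k (tcomul k SA) (pbSub k SA π) :=
  isSubcoalg_sSup fun _ hC => hC.1

lemma pbFst_eq_pbSnd_of_mem_pbSub {t : A ⊗[k] A} (ht : t ∈ pbSub k SA π) :
    pbFst k SA π t = pbSnd k SA π t :=
  (sSup_le fun _ hC s hs => hC.2 s hs :
    pbSub k SA π ≤ LinearMap.eqLocus (pbFst k SA π) (pbSnd k SA π)) ht

lemma isSubcoalg_map₂_mk {D : Submodule k A} (hD : IsSubcoalg k SA.Δ D) :
    IsSubcoalg k (tcomul k SA) (Submodule.map₂ (mk k A A) D D) := by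
  rw [isSubcoalg_iff] at hD ⊢
  refine Submodule.map₂_le.2 fun y hy y' hy' => ?_
  have := map₂_map₂_mk_le (β := (mk k (A ⊗[k] A) (A ⊗[k] A)).compr₂
    (tensorTensorTensorComm k A A A A).toLinearMap)
    (S := Submodule.map₂ (mk k _ _) (Submodule.map₂ (mk k A A) D D) (Submodule.map₂ (mk k A A) D D))
    (fun a ha b hb c hc d hd => by
      simpa using Submodule.apply_mem_map₂ (mk k _ _) (Submodule.apply_mem_map₂ (mk k A A) ha hc)
        (Submodule.apply_mem_map₂ (mk k A A) hb hd))
    (Submodule.apply_mem_map₂ _ (hD hy) (hD hy'))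
  simpa [tcomul] using this

lemma map₂_mk_Fsub_le_pbSub (oneB : B) :
    Submodule.map₂ (mk k A A) (Fsub k SA oneB π) (Fsub k SA oneB π) ≤ pbSub k SA π := by
  refine le_pbSub (isSubcoalg_map₂_mk (Fsub_isSubcoalg oneB)) fun t ht => ?_
  refine (Submodule.map₂_le.2 fun y hy y' hy' => ?_ :
    _ ≤ LinearMap.eqLocus (pbFst k SA π) (pbSnd k SA π)) ht
  simp [pbFst, pbSnd, map_eq_smul_of_mem_Fsub hy, map_eq_smul_of_mem_Fsub hy', smul_smul, mul_comm]

lemma map₂_mul_mem_pbSub (hπ : DivBialgHom k SA SB π) {t t' : A ⊗[k] A}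
    (ht : t ∈ pbSub k SA π) (ht' : t' ∈ pbSub k SA π) :
    map₂ SA.mul SA.mul t t' ∈ pbSub k SA π := by
  set C := Submodule.map₂ (map₂ SA.mul SA.mul) (pbSub k SA π) (pbSub k SA π)
  have hsub : IsSubcoalg k (tcomul k SA) C := by
    rw [isSubcoalg_iff]
    refine Submodule.map₂_le.2 fun u hu u' hu' => ?_
    rw [Submodule.mem_comap, tcomul_map₂_mul]
    refine map₂_map₂_mk_le ?_ (Submodule.apply_mem_map₂ _
      ((isSubcoalg_iff _ _).1 pbSub_isSubcoalg hu)
      ((isSubcoalg_iff _ _).1 pbSub_isSubcoalg hu'))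
    intro a ha b hb c hc d hd
    simpa [map₂_apply_tmul] using Submodule.apply_mem_map₂ (mk k _ _)
      (Submodule.apply_mem_map₂ _ ha hc) (Submodule.apply_mem_map₂ _ hb hd)
  have hCπ : C ≤ LinearMap.eqLocus (pbFst k SA π) (pbSnd k SA π) :=
    Submodule.map₂_le.2 fun u hu u' hu' => by
      simp only [LinearMap.mem_eqLocus, pbFst_map₂_mul hπ, pbSnd_map₂_mul hπ,
        pbFst_eq_pbSnd_of_mem_pbSub hu, pbFst_eq_pbSnd_of_mem_pbSub hu']
  exact le_pbSub hsub hCπ (Submodule.apply_mem_map₂ _ ht ht')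

lemma tcomul_map_comul (hz : DivBialgHom k SB SA z) (b : B) :
    tcomul k SA (map z z (SB.Δ b)) = map (map z z ∘ₗ SB.Δ) (map z z ∘ₗ SB.Δ) (SB.Δ b) := by
  have hΔz : SA.Δ ∘ₗ z = map z z ∘ₗ SB.Δ := LinearMap.ext fun u => (hz.map_Δ u).symm
  calc tcomul k SA (map z z (SB.Δ b))
      = tensorTensorTensorComm k A A A A (map (map z z) (map z z) (map SB.Δ SB.Δ (SB.Δ b))) := by
        rw [tcomul, LinearMap.comp_apply, map_map, hΔz, ← map_map]; rfl
    _ = map (map z z) (map z z) (map SB.Δ SB.Δ (SB.Δ b)) := by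
        rw [← LinearEquiv.coe_toLinearMap, ← LinearMap.comp_apply, tensorTensorTensorComm_comp_map,
          LinearMap.comp_apply, LinearEquiv.coe_toLinearMap, SB.tensorTensorTensorComm_map_comul]
    _ = map (map z z ∘ₗ SB.Δ) (map z z ∘ₗ SB.Δ) (SB.Δ b) := by rw [map_map]

lemma pbFst_comp_map_section (hz : DivBialgHom k SB SA z) (hsec : π ∘ₗ z = LinearMap.id) :
    pbFst k SA π ∘ₗ map z z = (TensorProduct.rid k B).toLinearMap ∘ₗ SB.ε.lTensor B := by
  ext b b'
  simp [pbFst, hz.map_ε, ← LinearMap.comp_apply π z, hsec]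

lemma pbSnd_comp_map_section (hz : DivBialgHom k SB SA z) (hsec : π ∘ₗ z = LinearMap.id) :
    pbSnd k SA π ∘ₗ map z z = (TensorProduct.lid k B).toLinearMap ∘ₗ SB.ε.rTensor B := by
  ext b b'
  simp [pbSnd, hz.map_ε, ← LinearMap.comp_apply π z, hsec]

lemma map_comul_mem_pbSub (hz : DivBialgHom k SB SA z) (hsec : π ∘ₗ z = LinearMap.id) (b : B) :
    map z z (SB.Δ b) ∈ pbSub k SA π := by
  refine le_pbSub (C := LinearMap.range (map z z ∘ₗ SB.Δ)) ?_ ?_ ⟨b, rfl⟩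
  · rw [isSubcoalg_iff]
    rintro _ ⟨b, rfl⟩
    rw [Submodule.mem_comap, LinearMap.comp_apply, tcomul_map_comul hz, ← range_map]
    exact LinearMap.mem_range_self _ _
  · rintro _ ⟨b, rfl⟩
    rw [LinearMap.comp_apply, ← LinearMap.comp_apply (pbFst k SA π),
      ← LinearMap.comp_apply (pbSnd k SA π), pbFst_comp_map_section hz hsec,
      pbSnd_comp_map_section hz hsec]
    simp [SB.counit_left, SB.counit_right]

lemma lTensor_comul_of_mem_Fsub (hz : DivBialgHom k SB SA z) {x : A}
    (hx : x ∈ Fsub k SA SB.one π) : (z ∘ₗ π).lTensor A (SA.Δ x) = x ⊗ₜ SA.one := by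
  have hF : Submodule.map₂ (mk k A A) (Fsub k SA SB.one π) (Fsub k SA SB.one π) ≤
      LinearMap.eqLocus ((z ∘ₗ π).lTensor A)
        ((mk k A A).flip SA.one ∘ₗ (TensorProduct.rid k A).toLinearMap ∘ₗ SA.ε.lTensor A) :=
    Submodule.map₂_le.2 fun y _ y' hy' => by
      simp [map_eq_smul_of_mem_Fsub hy', hz.map_one, smul_tmul']
  simpa [SA.counit_right] using
    hF ((isSubcoalg_iff _ _).1 (Fsub_isSubcoalg _) hx)

lemma rTensor_comul_of_mem_Fsub (hz : DivBialgHom k SB SA z) {x : A}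
    (hx : x ∈ Fsub k SA SB.one π) : (z ∘ₗ π).rTensor A (SA.Δ x) = SA.one ⊗ₜ x := by
  have hF : Submodule.map₂ (mk k A A) (Fsub k SA SB.one π) (Fsub k SA SB.one π) ≤
      LinearMap.eqLocus ((z ∘ₗ π).rTensor A)
        (mk k A A SA.one ∘ₗ (TensorProduct.lid k A).toLinearMap ∘ₗ SA.ε.rTensor A) :=
    Submodule.map₂_le.2 fun y hy y' _ => by
      simp [map_eq_smul_of_mem_Fsub hy, hz.map_one, smul_tmul]
  simpa [SA.counit_left] using
    hF ((isSubcoalg_iff _ _).1 (Fsub_isSubcoalg _) hx)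

lemma lTensor_comul_section (hz : DivBialgHom k SB SA z) (hsec : π ∘ₗ z = LinearMap.id) (b : B) :
    (z ∘ₗ π).lTensor A (SA.Δ (z b)) = map z z (SB.Δ b) := by
  rw [← hz.map_Δ, ← LinearMap.comp_apply, LinearMap.lTensor_comp_map, LinearMap.comp_assoc, hsec,
    LinearMap.comp_id]

namespace BoxPlusData

variable (P : BoxPlusData k SA SB π z)

lemma bp_congr {t s : A ⊗[k] A} (hts : t = s) (ht : t ∈ pbSub k SA π) (hs : s ∈ pbSub k SA π) :
    P.bp ⟨t, ht⟩ = P.bp ⟨s, hs⟩ := by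
  subst hts; rfl

lemma bp_tmul_one (hz : DivBialgHom k SB SA z) {x : A} (hx : x ∈ Fsub k SA SB.one π)
    (h : x ⊗ₜ SA.one ∈ pbSub k SA π) : P.bp ⟨x ⊗ₜ SA.one, h⟩ = x := by
  have e := lTensor_comul_of_mem_Fsub hz hx
  exact (P.bp_congr e.symm h (e ▸ h)).trans (P.bp_unit_right x _)

lemma bp_one_tmul (hz : DivBialgHom k SB SA z) {x : A} (hx : x ∈ Fsub k SA SB.one π)
    (h : SA.one ⊗ₜ x ∈ pbSub k SA π) : P.bp ⟨SA.one ⊗ₜ x, h⟩ = x := by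
  have e := rTensor_comul_of_mem_Fsub hz hx
  exact (P.bp_congr e.symm h (e ▸ h)).trans (P.bp_unit_left x _)

lemma bp_map_comul (hz : DivBialgHom k SB SA z) (hsec : π ∘ₗ z = LinearMap.id) (b : B)
    (h : map z z (SB.Δ b) ∈ pbSub k SA π) : P.bp ⟨map z z (SB.Δ b), h⟩ = z b := by
  have e := lTensor_comul_section hz hsec b
  exact (P.bp_congr e.symm h (e ▸ h)).trans (P.bp_unit_right (z b) _)

lemma bp_tmul (hπ : DivBialgHom k SA SB π) (hz : DivBialgHom k SB SA z) {x x' : A}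
    (hx : x ∈ Fsub k SA SB.one π) (hx' : x' ∈ Fsub k SA SB.one π)
    (h : x ⊗ₜ x' ∈ pbSub k SA π) : P.bp ⟨x ⊗ₜ x', h⟩ = SA.mul x x' := by
  have h₁ : x ⊗ₜ SA.one ∈ pbSub k SA π :=
    map₂_mk_Fsub_le_pbSub _ (Submodule.apply_mem_map₂ _ hx (one_mem_Fsub hπ))
  have h₂ : SA.one ⊗ₜ x' ∈ pbSub k SA π :=
    map₂_mk_Fsub_le_pbSub _ (Submodule.apply_mem_map₂ _ (one_mem_Fsub hπ) hx')
  have e : map₂ SA.mul SA.mul (x ⊗ₜ SA.one) (SA.one ⊗ₜ x') = x ⊗ₜ x' := by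
    rw [map₂_apply_tmul, map_tmul, SA.mul_one, SA.one_mul]
  calc P.bp ⟨x ⊗ₜ x', h⟩
      = P.bp ⟨map₂ SA.mul SA.mul (x ⊗ₜ SA.one) (SA.one ⊗ₜ x'), e ▸ h⟩ := P.bp_congr e.symm _ _
    _ = SA.mul (P.bp ⟨_, h₁⟩) (P.bp ⟨_, h₂⟩) := P.bp_mul ⟨_, h₁⟩ ⟨_, h₂⟩ _
    _ = SA.mul x x' := by rw [P.bp_tmul_one hz hx, P.bp_one_tmul hz hx']

end BoxPlusData

end FormalLoops

open FormalLoops in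
theorem fsub_distributive_general
    (k : Type*) [Field k]
    {A B : Type*} [AddCommGroup A] [Module k A] [AddCommGroup B] [Module k B]
    (SA : DivBialg k A) (SB : DivBialg k B)
    (π : A →ₗ[k] B) (z : B →ₗ[k] A)
    (hπ : DivBialgHom k SA SB π) (hz : DivBialgHom k SB SA z)
    (hsec : π ∘ₗ z = LinearMap.id)
    (P : BoxPlusData k SA SB π z)
    (F : Submodule k A) (hF : F = Fsub k SA SB.one π) :
    ∀ x ∈ F, ∀ x' ∈ F, ∀ b : B,
      (∃ h : TensorProduct.map (SA.mul x ∘ₗ z) (SA.mul x' ∘ₗ z) (SB.Δ b) ∈ pbSub k SA π,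
        SA.mul (SA.mul x x') (z b)
          = P.bp ⟨TensorProduct.map (SA.mul x ∘ₗ z) (SA.mul x' ∘ₗ z) (SB.Δ b), h⟩) ∧
      (∃ h : TensorProduct.map (SA.mul.flip x ∘ₗ z) (SA.mul.flip x' ∘ₗ z) (SB.Δ b)
              ∈ pbSub k SA π,
        SA.mul (z b) (SA.mul x x')
          = P.bp ⟨TensorProduct.map (SA.mul.flip x ∘ₗ z) (SA.mul.flip x' ∘ₗ z) (SB.Δ b), h⟩) := by
  subst hF
  intro x hx x' hx' b
  have hxx' : x ⊗ₜ x' ∈ pbSub k SA π :=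
    map₂_mk_Fsub_le_pbSub _ (Submodule.apply_mem_map₂ _ hx hx')
  have hb := map_comul_mem_pbSub hz hsec b
  have e₁ : map (SA.mul x ∘ₗ z) (SA.mul x' ∘ₗ z) (SB.Δ b) =
      map₂ SA.mul SA.mul (x ⊗ₜ x') (map z z (SB.Δ b)) := by
    rw [map₂_apply_tmul, map_map]
  have e₂ : map (SA.mul.flip x ∘ₗ z) (SA.mul.flip x' ∘ₗ z) (SB.Δ b) =
      map₂ SA.mul SA.mul (map z z (SB.Δ b)) (x ⊗ₜ x') := by
    induction SB.Δ b <;> simp_all [map₂_apply_tmul]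
  have h₁ := map₂_mul_mem_pbSub hπ hxx' hb
  have h₂ := map₂_mul_mem_pbSub hπ hb hxx'
  refine ⟨⟨e₁ ▸ h₁, ?_⟩, ⟨e₂ ▸ h₂, ?_⟩⟩
  · rw [P.bp_congr e₁ _ h₁, P.bp_mul ⟨_, hxx'⟩ ⟨_, hb⟩ h₁, P.bp_tmul hπ hz hx hx' hxx',
      P.bp_map_comul hz hsec b hb]
  · rw [P.bp_congr e₂ _ h₂, P.bp_mul ⟨_, hb⟩ ⟨_, hxx'⟩ h₂, P.bp_tmul hπ hz hx hx' hxx',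
      P.bp_map_comul hz hsec b hb]

open FormalLoops in
/-- for `x, x' ∈ F(A)` and `b ∈ B` (acting through `z`),
`(x·x')·b = ⊞(Σ (x·b₍₁₎) ⊗ (x'·b₍₂₎))` and `b·(x·x') = ⊞(Σ (b₍₁₎·x) ⊗ (b₍₂₎·x'))`,
and in particular the displayed tensors lie in `A ⊗_B A`. -/
theorem fsub_distributive
    (k : Type*) [Field k] [CharZero k]
    {A B : Type*} [AddCommGroup A] [Module k A] [AddCommGroup B] [Module k B]
    (SA : DivBialg k A) (SB : DivBialg k B)
    (π : A →ₗ[k] B) (z : B →ₗ[k] A)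
    (hπ : DivBialgHom k SA SB π) (hz : DivBialgHom k SB SA z)
    (hsec : π ∘ₗ z = LinearMap.id)
    (P : BoxPlusData k SA SB π z)
    (F : Submodule k A) (hF : F = Fsub k SA SB.one π) :
    ∀ x ∈ F, ∀ x' ∈ F, ∀ b : B,
      (∃ h : TensorProduct.map (SA.mul x ∘ₗ z) (SA.mul x' ∘ₗ z) (SB.Δ b) ∈ pbSub k SA π,
        SA.mul (SA.mul x x') (z b)
          = P.bp ⟨TensorProduct.map (SA.mul x ∘ₗ z) (SA.mul x' ∘ₗ z) (SB.Δ b), h⟩) ∧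
      (∃ h : TensorProduct.map (SA.mul.flip x ∘ₗ z) (SA.mul.flip x' ∘ₗ z) (SB.Δ b)
              ∈ pbSub k SA π,
        SA.mul (z b) (SA.mul x x')
          = P.bp ⟨TensorProduct.map (SA.mul.flip x ∘ₗ z) (SA.mul.flip x' ∘ₗ z) (SB.Δ b), h⟩) :=
  fsub_distributive_general k SA SB π z hπ hz hsec P F hF
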